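/- Under assumptions (A1)-(A4), the graph satisfies the Bakry-Émery curvature-dimension condition CD(K,n) at each of the two boundary vertices, i.e., Γ₂(f,f)(i) ≥ (1/n)(Δf)²(i) + KΓ(f,f)(i) for i = 1,2 and all f ∈ ℝ^V. -/

import Mathlib

open Finset

variable {V : Type*} [Fintype V] [DecidableEq V]

/-- The weighted graph Laplacian: `Δu(x) = (1/m x) ∑_y (u y - u x) w x y`. -/
noncomputable def glap (m : V → ℝ) (w : V → V → ℝ) (u : V → ℝ) (x : V) : ℝ :=
  (1 / m x) * ∑ y, (u y - u x) * w x y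

/-- The carré du champ operator `Γ(u,v) = (1/2)(Δ(uv) - vΔu - uΔv)`. -/
noncomputable def gGam (m : V → ℝ) (w : V → V → ℝ) (u v : V → ℝ) (x : V) : ℝ :=
  (1 / 2) * (glap m w (fun z => u z * v z) x - v x * glap m w u x - u x * glap m w v x)

/-- The iterated carré du champ `Γ₂(u,v) = (1/2)(ΔΓ(u,v) - Γ(Δu,v) - Γ(u,Δv))`. -/
noncomputable def gGam2 (m : V → ℝ) (w : V → V → ℝ) (u v : V → ℝ) (x : V) : ℝ :=
  (1 / 2) * (glap m w (gGam m w u v) x - gGam m w (glap m w u) v x - gGam m w u (glap m w v) x)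

/-- Vertex inner product `⟨u,v⟩ = ∑_x u x v x m x`. -/
noncomputable def vip (m : V → ℝ) (u v : V → ℝ) : ℝ := ∑ x, u x * v x * m x

/-- Edge (1-form) inner product of differentials:
`⟨du,dv⟩ = ∑_{{x,y}∈E} (u y - u x)(v y - v x) w x y = (1/2)∑_{x,y}`. -/
noncomputable def eip (w : V → V → ℝ) (u v : V → ℝ) : ℝ :=
  (1 / 2) * ∑ x, ∑ y, (u y - u x) * (v y - v x) * w x y

/-- `(m,w)` is a weighted graph structure: positive vertex measure, symmetric
nonnegative edge weights, no loops. -/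
def WeightedGraph (m : V → ℝ) (w : V → V → ℝ) : Prop :=
  (∀ x, 0 < m x) ∧ (∀ x y, w x y = w y x) ∧ (∀ x y, 0 ≤ w x y) ∧ (∀ x, w x x = 0)

/-- The underlying simple graph: `x ∼ y` iff `w x y > 0`. -/
def wgraph (w : V → V → ℝ) : SimpleGraph V := SimpleGraph.fromRel (fun x y => 0 < w x y)

/-- The Bakry-Émery curvature-dimension condition `CD(K,n)`. -/
def CD (m : V → ℝ) (w : V → V → ℝ) (K n : ℝ) : Prop :=
  ∀ (f : V → ℝ) (x : V), gGam2 m w f f x ≥ (1 / n) * (glap m w f x) ^ 2 + K * gGam m w f f x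

/-- `B` is a vertex boundary: nonempty, independent, and every boundary vertex is
adjacent to some interior vertex. -/
def GraphBoundary (w : V → V → ℝ) (B : Finset V) : Prop :=
  B.Nonempty ∧ (∀ x ∈ B, ∀ y ∈ B, w x y = 0) ∧ (∀ x ∈ B, ∃ y, y ∉ B ∧ 0 < w x y)

/-- `σ` is a Steklov eigenvalue: there is `u`, harmonic on the interior, with
boundary restriction nonzero, and `∂u/∂n = σ u` on `B`. -/
def SteklovEig (m : V → ℝ) (w : V → V → ℝ) (B : Finset V) (σ : ℝ) : Prop :=
  ∃ u : V → ℝ, (∃ x ∈ B, u x ≠ 0) ∧ (∀ x, x ∉ B → glap m w u x = 0) ∧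
    (∀ x ∈ B, - glap m w u x = σ * u x)

/-- `μ` is an eigenvalue of `-Δ`. -/
def LapEig (m : V → ℝ) (w : V → V → ℝ) (μ : ℝ) : Prop :=
  ∃ u : V → ℝ, u ≠ 0 ∧ ∀ x, - glap m w u x = μ * u x

/-- The edge weight of the induced graph on the interior `Ω = Bᶜ`. -/
def wRes (B : Finset V) (w : V → V → ℝ) : V → V → ℝ :=
  fun x y => if x ∈ B ∨ y ∈ B then 0 else w x y

/-! Since `Δ`, `Γ` and `Γ₂` do not see constants, we may assume `f a = 0`. Then
`2Γ₂(f)(a) = (1/m_a) ∑_y w_ay (Γ(f)(y) - f(y)Δf(y)) - Deg(a)Γ(f)(a) + (Δf(a))²`, and (A4) makes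
`w_ay / (2m_y)` equal to `c = (n+2)K/(4(n-1))` for every interior `y`, so the first term is `c` times
a sum over the two-ball of `a`. Its edges inside `Ω` contribute `Q ≥ 0` (the sum symmetrises to
`2∑ w_yz (f y - f z)²`), the edges from `Ω` to `{a, b}` a quadratic in `β = f b`. With
`D = Deg(a) = nK/(n-1)` everything adds up to the sum of squares
`2(Γ₂(f) - (Δf)²/n - KΓ(f)) = cQ + (c/D)(Dβ - 2Δf)² + (4/n)(2DΓ(f) - (Δf)²)`,
whose last term is nonnegative by Cauchy–Schwarz. -/

noncomputable def wdeg (m : V → ℝ) (w : V → V → ℝ) (x : V) : ℝ := (1 / m x) * ∑ y, w x y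

section Calculus

omit [DecidableEq V]

variable (m : V → ℝ) (w : V → V → ℝ)

theorem gGam_eq_sum (u v : V → ℝ) (x : V) :
    gGam m w u v x = 1 / (2 * m x) * ∑ y, (u y - u x) * (v y - v x) * w x y := by
  simp only [gGam, glap, mul_sum, ← sum_sub_distrib]
  exact sum_congr rfl fun y _ => by ring

theorem gGam_comm (u v : V → ℝ) : gGam m w u v = gGam m w v u := by
  funext x
  simp only [gGam_eq_sum, mul_comm (u _ - u x)]

theorem glap_sub_const (u : V → ℝ) (c : ℝ) : glap m w (fun z => u z - c) = glap m w u := by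
  funext x
  simp only [glap, sub_sub_sub_cancel_right]

theorem gGam_sub_const_left (u v : V → ℝ) (c : ℝ) :
    gGam m w (fun z => u z - c) v = gGam m w u v := by
  funext x
  simp only [gGam_eq_sum, sub_sub_sub_cancel_right]

theorem gGam_sub_const_right (u v : V → ℝ) (c : ℝ) :
    gGam m w u (fun z => v z - c) = gGam m w u v := by
  rw [gGam_comm, gGam_sub_const_left, gGam_comm]

theorem gGam2_sub_const (u : V → ℝ) (c : ℝ) :
    gGam2 m w (fun z => u z - c) (fun z => u z - c) = gGam2 m w u u := by
  funext x
  simp only [gGam2, glap_sub_const, gGam_sub_const_left, gGam_sub_const_right]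

theorem gGam_sub_mul_glap (u : V → ℝ) (x : V) :
    gGam m w u u x - u x * glap m w u x
      = 1 / (2 * m x) * ∑ y, ((u y - 2 * u x) ^ 2 - u x ^ 2) * w x y := by
  simp only [gGam_eq_sum, glap, mul_sum, ← sum_sub_distrib]
  exact sum_congr rfl fun y _ => by ring

theorem two_mul_gGam2_of_eq_zero (u : V → ℝ) (x : V) (hu : u x = 0) :
    2 * gGam2 m w u u x
      = 1 / m x * ∑ y, (gGam m w u u y - u y * glap m w u y) * w x y
        - wdeg m w x * gGam m w u u x + glap m w u x ^ 2 := by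
  set G := gGam m w u u
  set D := glap m w u
  have hDx : D x = 1 / m x * ∑ y, u y * w x y := by simp only [D, glap, hu, sub_zero]
  have hΔG : glap m w G x = 1 / m x * ∑ y, G y * w x y - G x * wdeg m w x := by
    simp only [glap, wdeg, sub_mul, sum_sub_distrib, ← mul_sum]
    ring
  have hΓDu : gGam m w D u x
      = 1 / (2 * m x) * (∑ y, D y * u y * w x y - D x * ∑ y, u y * w x y) := by
    simp only [gGam_eq_sum, hu, sub_zero, sub_mul, sum_sub_distrib, mul_assoc, ← mul_sum]
  have hsplit : ∑ y, (G y - u y * D y) * w x y = ∑ y, G y * w x y - ∑ y, D y * u y * w x y := by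
    rw [← sum_sub_distrib]
    exact sum_congr rfl fun y _ => by ring
  rw [gGam2, gGam_comm m w u D, hΔG, hΓDu, hsplit, sq, hDx]
  ring

theorem sq_glap_le (x : V) (hw : ∀ y, 0 ≤ w x y) (u : V → ℝ) :
    glap m w u x ^ 2 ≤ 2 * wdeg m w x * gGam m w u u x := by
  have hCS : (∑ y, (u y - u x) * w x y) ^ 2
      ≤ (∑ y, w x y) * ∑ y, (u y - u x) * (u y - u x) * w x y :=
    sum_sq_le_sum_mul_sum_of_sq_le_mul _ (fun y _ => hw y)
      (fun y _ => mul_nonneg (mul_self_nonneg _) (hw y)) (fun y _ => by ring_nf; rfl)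
  calc glap m w u x ^ 2 = (1 / m x) ^ 2 * (∑ y, (u y - u x) * w x y) ^ 2 := by
        rw [glap, mul_pow]
    _ ≤ (1 / m x) ^ 2 * ((∑ y, w x y) * ∑ y, (u y - u x) * (u y - u x) * w x y) := by
        gcongr
    _ = 2 * wdeg m w x * gGam m w u u x := by
        rw [wdeg, gGam_eq_sum]
        ring

omit [Fintype V] in
theorem sum_sum_sq_sub_two_mul_nonneg (hsym : ∀ y z, w y z = w z y) (hw : ∀ y z, 0 ≤ w y z)
    (u : V → ℝ) (s : Finset V) :
    0 ≤ ∑ y ∈ s, ∑ z ∈ s, ((u z - 2 * u y) ^ 2 - u y ^ 2) * w y z := by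
  have hsymm : 2 * ∑ y ∈ s, ∑ z ∈ s, ((u z - 2 * u y) ^ 2 - u y ^ 2) * w y z
      = ∑ y ∈ s, ∑ z ∈ s, 4 * (u y - u z) ^ 2 * w y z := by
    rw [two_mul]
    nth_rewrite 2 [sum_comm]
    simp only [← sum_add_distrib]
    exact sum_congr rfl fun y _ => sum_congr rfl fun z _ => by rw [hsym z y]; ring
  have : 0 ≤ ∑ y ∈ s, ∑ z ∈ s, 4 * (u y - u z) ^ 2 * w y z :=
    sum_nonneg fun y _ => sum_nonneg fun z _ => by have := hw y z; positivity
  linarith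

end Calculus

theorem cd_ineq_of_two_mul_eq {K n D G L Q β Γ₂ : ℝ} (hK : 0 < K) (hn : 1 < n)
    (hD : D = n * K / (n - 1)) (hCS : L ^ 2 ≤ 2 * D * G) (hQ : 0 ≤ Q)
    (h : 2 * Γ₂ = (n + 2) * K / (n - 1) / 4 * (12 * G - 4 * β * L + D * β ^ 2 + Q)
      - D * G + L ^ 2) :
    Γ₂ ≥ 1 / n * L ^ 2 + K * G := by
  have hn1 : 0 < n - 1 := by linarith
  have hDpos : 0 < D := by rw [hD]; positivity
  have hc : 0 < (n + 2) * K / (n - 1) / 4 := by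
    have : 0 < n + 2 := by linarith
    positivity
  have hsos : 2 * (Γ₂ - (1 / n * L ^ 2 + K * G))
      = (n + 2) * K / (n - 1) / 4 * Q
        + (n + 2) * K / (n - 1) / 4 / D * (D * β - 2 * L) ^ 2
        + 4 / n * (2 * D * G - L ^ 2) := by
    rw [mul_sub, h, hD]
    field_simp
    ring
  have : 0 ≤ 2 * (Γ₂ - (1 / n * L ^ 2 + K * G)) := by
    rw [hsos]
    have : 0 ≤ 2 * D * G - L ^ 2 := by linarith
    positivity
  linarith

section Boundary

variable {m : V → ℝ} {w : V → V → ℝ} {a b : V}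

theorem sum_eq_add_add_sum_compl_pair (hab : a ≠ b) (g : V → ℝ) :
    ∑ y, g y = g a + g b + ∑ y ∈ ({a, b} : Finset V)ᶜ, g y := by
  rw [← sum_add_sum_compl {a, b} g, sum_pair hab]

theorem sum_mul_weight_eq_sum_compl_pair (hloop : w a a = 0) (hnadj : w a b = 0) (g : V → ℝ) :
    ∑ y, g y * w a y = ∑ y ∈ ({a, b} : Finset V)ᶜ, g y * w a y := by
  refine (sum_subset (subset_univ _) fun y _ hy => ?_).symm
  obtain rfl | rfl : y = a ∨ y = b := by simpa [or_iff_not_imp_left] using hy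
  · rw [hloop, mul_zero]
  · rw [hnadj, mul_zero]

theorem gGam_sub_mul_glap_mul_weight {C : ℝ} (hsym : ∀ x y, w x y = w y x) (hab : a ≠ b)
    (hwe : ∀ x ∉ ({a, b} : Finset V), w a x = w b x)
    (hDb : ∀ x ∉ ({a, b} : Finset V), 2 * w a x / m x = C)
    (f : V → ℝ) (hf : f a = 0) {y : V} (hy : y ∉ ({a, b} : Finset V)) :
    (gGam m w f f y - f y * glap m w f y) * w a y
      = C / 4 * ((6 * f y ^ 2 - 4 * f b * f y + f b ^ 2) * w a y
        + ∑ z ∈ ({a, b} : Finset V)ᶜ, ((f z - 2 * f y) ^ 2 - f y ^ 2) * w y z) := by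
  rw [gGam_sub_mul_glap, sum_eq_add_add_sum_compl_pair hab, hf, hsym y a, hsym y b, ← hwe y hy,
    ← hDb y hy]
  ring

theorem two_mul_gGam2_eq_at_boundary {C : ℝ} (hW : WeightedGraph m w) (hab : a ≠ b)
    (hnadj : w a b = 0) (hwe : ∀ x ∉ ({a, b} : Finset V), w a x = w b x)
    (hDb : ∀ x ∉ ({a, b} : Finset V), 2 * w a x / m x = C) (f : V → ℝ) (hf : f a = 0) :
    2 * gGam2 m w f f a
      = C / 4 * (12 * gGam m w f f a - 4 * f b * glap m w f a + wdeg m w a * f b ^ 2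
          + 1 / m a * ∑ y ∈ ({a, b} : Finset V)ᶜ, ∑ z ∈ ({a, b} : Finset V)ᶜ,
              ((f z - 2 * f y) ^ 2 - f y ^ 2) * w y z)
        - wdeg m w a * gGam m w f f a + glap m w f a ^ 2 := by
  obtain ⟨hm, hsym, -, hloop⟩ := hW
  have hma := (hm a).ne'
  have hΩ := sum_mul_weight_eq_sum_compl_pair (hloop a) hnadj
  have hdeg : ∑ y ∈ ({a, b} : Finset V)ᶜ, w a y = m a * wdeg m w a := by
    simpa [wdeg, hma] using (hΩ fun _ => 1).symm
  have hlap : ∑ y ∈ ({a, b} : Finset V)ᶜ, f y * w a y = m a * glap m w f a := by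
    rw [← hΩ, glap, hf]
    simp only [sub_zero]
    field_simp
  have hgam : ∑ y ∈ ({a, b} : Finset V)ᶜ, f y ^ 2 * w a y = 2 * m a * gGam m w f f a := by
    rw [← hΩ, gGam_eq_sum, hf]
    simp only [sub_zero, sq]
    field_simp
  have hquad : ∑ y ∈ ({a, b} : Finset V)ᶜ, (6 * f y ^ 2 - 4 * f b * f y + f b ^ 2) * w a y
      = 6 * (2 * m a * gGam m w f f a) - 4 * f b * (m a * glap m w f a)
        + f b ^ 2 * (m a * wdeg m w a) := by
    simp only [add_mul, sub_mul, sum_add_distrib, sum_sub_distrib, mul_assoc, ← mul_sum, hdeg,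
      hlap, hgam]
  rw [two_mul_gGam2_of_eq_zero m w f a hf, hΩ,
    sum_congr rfl fun y hy => gGam_sub_mul_glap_mul_weight hsym hab hwe hDb f hf (mem_compl.mp hy),
    ← mul_sum, sum_add_distrib, hquad]
  field_simp
  ring

theorem gGam2_ge_at_boundary {K n : ℝ} (hW : WeightedGraph m w) (hK : 0 < K) (hn : 1 < n)
    (hab : a ≠ b) (hnadj : w a b = 0) (hwe : ∀ x ∉ ({a, b} : Finset V), w a x = w b x)
    (hDeg : wdeg m w a = n * K / (n - 1))
    (hDb : ∀ x ∉ ({a, b} : Finset V), 2 * w a x / m x = (n + 2) * K / (n - 1)) (f : V → ℝ) :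
    gGam2 m w f f a ≥ 1 / n * glap m w f a ^ 2 + K * gGam m w f f a := by
  have hid := two_mul_gGam2_eq_at_boundary hW hab hnadj hwe hDb (fun z => f z - f a) (sub_self _)
  obtain ⟨hm, hsym, hw, -⟩ := hW
  have hQ := mul_nonneg (one_div_nonneg.mpr (hm a).le)
    (sum_sum_sq_sub_two_mul_nonneg w hsym hw (fun z => f z - f a) ({a, b} : Finset V)ᶜ)
  have key := cd_ineq_of_two_mul_eq hK hn hDeg (sq_glap_le m w a (hw a) _) hQ hid
  rwa [gGam2_sub_const, glap_sub_const, gGam_sub_const_left, gGam_sub_const_right] at key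

end Boundary

theorem stmt14_general (m : V → ℝ) (w : V → V → ℝ) (a b : V) (hW : WeightedGraph m w)
    (K n : ℝ) (hK : 0 < K) (hn : 1 < n)
    (hab : a ≠ b) (hnadj : w a b = 0)
    (hwe : ∀ x, x ∉ ({a, b} : Finset V) → w a x = w b x)
    (hDega : (1 / m a) * ∑ y, w a y = n * K / (n - 1))
    (hDegb : (1 / m b) * ∑ y, w b y = n * K / (n - 1))
    (hDb : ∀ x, x ∉ ({a, b} : Finset V) → 2 * w a x / m x = (n + 2) * K / (n - 1)) :
    ∀ f : V → ℝ,
      (gGam2 m w f f a ≥ (1 / n) * (glap m w f a) ^ 2 + K * gGam m w f f a) ∧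
      (gGam2 m w f f b ≥ (1 / n) * (glap m w f b) ^ 2 + K * gGam m w f f b) := by
  intro f
  have hwe' : ∀ x ∉ ({b, a} : Finset V), w b x = w a x := by
    rw [pair_comm]
    exact fun x hx => (hwe x hx).symm
  have hDb' : ∀ x ∉ ({b, a} : Finset V), 2 * w b x / m x = (n + 2) * K / (n - 1) := by
    rw [pair_comm]
    exact fun x hx => hwe x hx ▸ hDb x hx
  exact ⟨gGam2_ge_at_boundary hW hK hn hab hnadj hwe hDega hDb f,
    gGam2_ge_at_boundary hW hK hn hab.symm ((hW.2.1 b a).trans hnadj) hwe' hDegb hDb' f⟩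

/-- under (A1)-(A4), the condition `CD(K,n)` holds at each of the
two boundary vertices. -/
theorem stmt14 (m : V → ℝ) (w : V → V → ℝ) (a b : V) (hW : WeightedGraph m w)
    (K n : ℝ) (hK : 0 < K) (hn : 1 < n)
    (hab : a ≠ b) (hnadj : w a b = 0)
    (hm : m a = m b)
    (hadj : ∀ x, x ∉ ({a, b} : Finset V) → 0 < w a x)
    (hwe : ∀ x, x ∉ ({a, b} : Finset V) → w a x = w b x)
    (hDega : (1 / m a) * ∑ y, w a y = n * K / (n - 1))
    (hDegb : (1 / m b) * ∑ y, w b y = n * K / (n - 1))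
    (hDb : ∀ x, x ∉ ({a, b} : Finset V) → 2 * w a x / m x = (n + 2) * K / (n - 1)) :
    ∀ f : V → ℝ,
      (gGam2 m w f f a ≥ (1 / n) * (glap m w f a) ^ 2 + K * gGam m w f f a) ∧
      (gGam2 m w f f b ≥ (1 / n) * (glap m w f b) ^ 2 + K * gGam m w f f b) :=
  stmt14_general m w a b hW K n hK hn hab hnadj hwe hDega hDegb hDb
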